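/- Suppose strict feasibility fails for the nonempty spectrahedron F = {X ⪰ 0 : A(X) = b} but strong duality holds for the best approximation problem min{½‖X − W‖² : X ∈ F}, and let λ be any solution of the auxiliary system. Then the solution set S = {y ∈ ℝᵐ : F(y) = 0} of the dual equation F(y) = A(P_{Sⁿ₊}(W + A*(y))) − b is unbounded; more precisely, for every ȳ ∈ S and every t ∈ ℝ₊ one has F(ȳ − tλ) = 0, so {ȳ − tλ : t ≥ 0} ⊆ S. -/

import Mathlib

open Matrix Set

noncomputable section

/-- Squared Frobenius norm via the trace inner product. -/
def frobSq {k : ℕ} (M : Matrix (Fin k) (Fin k) ℝ) : ℝ := (Mᵀ * M).trace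

/-- `P` is a nearest point to `X` in `C` (Frobenius norm). -/
def IsProjOn {k : ℕ} (C : Set (Matrix (Fin k) (Fin k) ℝ))
    (X P : Matrix (Fin k) (Fin k) ℝ) : Prop :=
  P ∈ C ∧ ∀ Y ∈ C, frobSq (X - P) ≤ frobSq (X - Y)

/-- The linear map `A X = (⟨Aᵢ, X⟩)ᵢ` (trace inner product). -/
def calA {n m : ℕ} (A : Fin m → Matrix (Fin n) (Fin n) ℝ)
    (X : Matrix (Fin n) (Fin n) ℝ) : Fin m → ℝ := fun i => (A i * X).trace

/-- The adjoint map `A* λ = ∑ᵢ λᵢ Aᵢ`. -/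
def adjA {n m : ℕ} (A : Fin m → Matrix (Fin n) (Fin n) ℝ) (lam : Fin m → ℝ) :
    Matrix (Fin n) (Fin n) ℝ := ∑ i, lam i • A i

/-- The spectrahedron `F = {X ⪰ 0 : A X = b}`. -/
def spectra {n m : ℕ} (A : Fin m → Matrix (Fin n) (Fin n) ℝ) (b : Fin m → ℝ) :
    Set (Matrix (Fin n) (Fin n) ℝ) := {X | X.PosSemidef ∧ calA A X = b}

/-- The dual residual map `F(y) = A(P_{Sⁿ₊}(W + A*y)) − b`, where `Pp` is the
nearest-point projection onto `Sⁿ₊`. -/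
def Fmap {n m : ℕ} (A : Fin m → Matrix (Fin n) (Fin n) ℝ) (b : Fin m → ℝ)
    (W : Matrix (Fin n) (Fin n) ℝ)
    (Pp : Matrix (Fin n) (Fin n) ℝ → Matrix (Fin n) (Fin n) ℝ)
    (y : Fin m → ℝ) : Fin m → ℝ :=
  calA A (Pp (W + adjA A y)) - b

/-! If `ȳ` solves the dual equation, `P = P_{Sⁿ₊}(W + A*ȳ)` lies in `F`, hence
`⟨A*λ, P⟩ = ⟨b, λ⟩ = 0`. A positive semidefinite matrix orthogonal to `P` is (up to sign)
a normal vector of `Sⁿ₊` at `P`, so by the variational inequality characterising the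
projection onto a convex set, moving the argument `W + A*ȳ` along `-A*λ` does not change its
projection. Hence `F(ȳ - tλ) = F(ȳ) = 0` for `t ≥ 0`, and since `λ ≠ 0` this ray is unbounded. -/

open Filter Topology

section Frobenius

variable {k : ℕ}

lemma frobSq_eq_trace_conjTranspose_mul_self (M : Matrix (Fin k) (Fin k) ℝ) :
    frobSq M = (Mᴴ * M).trace := by
  rw [frobSq, conjTranspose_eq_transpose_of_trivial]

lemma frobSq_nonneg (M : Matrix (Fin k) (Fin k) ℝ) : 0 ≤ frobSq M := by
  rw [frobSq_eq_trace_conjTranspose_mul_self]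
  exact (posSemidef_conjTranspose_mul_self M).trace_nonneg

lemma frobSq_eq_zero_iff {M : Matrix (Fin k) (Fin k) ℝ} : frobSq M = 0 ↔ M = 0 := by
  rw [frobSq_eq_trace_conjTranspose_mul_self, trace_conjTranspose_mul_self_eq_zero_iff]

lemma frobSq_sub (U V : Matrix (Fin k) (Fin k) ℝ) :
    frobSq (U - V) = frobSq U - 2 * (Uᵀ * V).trace + frobSq V := by
  have hsymm : (Vᵀ * U).trace = (Uᵀ * V).trace := by
    rw [← trace_transpose (Vᵀ * U), transpose_mul, transpose_transpose]
  simp only [frobSq, transpose_sub, sub_mul, mul_sub, trace_sub, hsymm]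
  ring

lemma frobSq_smul (t : ℝ) (M : Matrix (Fin k) (Fin k) ℝ) :
    frobSq (t • M) = t ^ 2 * frobSq M := by
  simp only [frobSq, transpose_smul, smul_mul, Matrix.mul_smul, trace_smul, smul_eq_mul]
  ring

end Frobenius

open scoped MatrixOrder ComplexOrder in
lemma Matrix.PosSemidef.trace_mul_nonneg {𝕜 ι : Type*} [RCLike 𝕜] [Fintype ι]
    {A B : Matrix ι ι 𝕜} (hA : A.PosSemidef) (hB : B.PosSemidef) : 0 ≤ (A * B).trace := by
  classical
  obtain ⟨C, rfl⟩ := CStarAlgebra.nonneg_iff_eq_star_mul_self.mp hA.nonneg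
  rw [star_eq_conjTranspose, trace_mul_cycle, trace_mul_cycle]
  exact (hB.mul_mul_conjTranspose_same C).trace_nonneg

lemma convex_setOf_posSemidef {ι : Type*} [Fintype ι] :
    Convex ℝ {Y : Matrix ι ι ℝ | Y.PosSemidef} :=
  fun _ hX _ hY _ _ ha hb _ => (hX.smul ha).add (hY.smul hb)

section Projection

variable {k : ℕ} {C : Set (Matrix (Fin k) (Fin k) ℝ)}

lemma IsProjOn.trace_transpose_mul_sub_nonpos (hC : Convex ℝ C) {M P : Matrix (Fin k) (Fin k) ℝ}
    (hP : IsProjOn C M P) {Y : Matrix (Fin k) (Fin k) ℝ} (hY : Y ∈ C) :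
    ((M - P)ᵀ * (Y - P)).trace ≤ 0 := by
  set c := ((M - P)ᵀ * (Y - P)).trace
  set d := frobSq (Y - P)
  have hsmall : ∀ t : ℝ, 0 < t → t < 1 → 2 * c ≤ t * d := by
    intro t ht0 ht1
    have hmem : P + t • (Y - P) ∈ C := hC.add_smul_sub_mem hP.1 hY ⟨ht0.le, ht1.le⟩
    have hmin := hP.2 _ hmem
    rw [show M - (P + t • (Y - P)) = (M - P) - t • (Y - P) by abel, frobSq_sub (M - P),
      frobSq_smul, Matrix.mul_smul, trace_smul, smul_eq_mul] at hmin
    nlinarith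
  have hlim : Tendsto (fun t : ℝ => t * d) (𝓝[>] 0) (𝓝 0) := by
    simpa using ((continuous_mul_const d).tendsto 0).mono_left nhdsWithin_le_nhds
  have hc : 2 * c ≤ 0 := ge_of_tendsto hlim <|
    eventually_nhdsWithin_of_forall (fun t ht => ht) |>.and (Ioo_mem_nhdsGT one_pos)
      |>.mono fun t ⟨ht0, ht⟩ => hsmall t ht0 ht.2
  linarith

lemma IsProjOn.eq_of_forall_trace_transpose_mul_sub_nonpos {N P Q : Matrix (Fin k) (Fin k) ℝ}
    (hQ : IsProjOn C N Q) (hP : P ∈ C) (hvi : ∀ Y ∈ C, ((N - P)ᵀ * (Y - P)).trace ≤ 0) :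
    Q = P := by
  have hmin := hQ.2 P hP
  rw [show N - Q = (N - P) - (Q - P) by abel, frobSq_sub] at hmin
  have hQP : frobSq (Q - P) = 0 :=
    le_antisymm (by linarith [hvi Q hQ.1]) (frobSq_nonneg _)
  exact sub_eq_zero.mp (frobSq_eq_zero_iff.mp hQP)

lemma IsProjOn.eq_of_isProjOn_sub_smul {M P Q Z : Matrix (Fin k) (Fin k) ℝ} {t : ℝ}
    (hP : IsProjOn {Y | Y.PosSemidef} M P) (hZ : Z.PosSemidef) (hZP : (Z * P).trace = 0)
    (ht : 0 ≤ t) (hQ : IsProjOn {Y | Y.PosSemidef} (M - t • Z) Q) : Q = P := by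
  refine hQ.eq_of_forall_trace_transpose_mul_sub_nonpos hP.1 fun Y hY => ?_
  have hZt : Zᵀ = Z := by
    rw [← conjTranspose_eq_transpose_of_trivial]
    exact hZ.isHermitian.eq
  have hZY : 0 ≤ (Zᵀ * (Y - P)).trace := by
    rw [hZt, mul_sub, trace_sub, hZP, sub_zero]
    exact hZ.trace_mul_nonneg hY
  rw [show M - t • Z - P = (M - P) - t • Z by abel, transpose_sub, transpose_smul, sub_mul,
    smul_mul, trace_sub, trace_smul, smul_eq_mul]
  nlinarith [hP.trace_transpose_mul_sub_nonpos convex_setOf_posSemidef hY]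

end Projection

section Dual

variable {n m : ℕ} (A : Fin m → Matrix (Fin n) (Fin n) ℝ)

lemma adjA_zero : adjA A 0 = 0 := by
  simp [adjA]

lemma adjA_sub_smul (y lam : Fin m → ℝ) (t : ℝ) :
    adjA A (y - t • lam) = adjA A y - t • adjA A lam := by
  simp only [adjA, Pi.sub_apply, Pi.smul_apply, smul_eq_mul, sub_smul, mul_smul,
    Finset.sum_sub_distrib, Finset.smul_sum]

lemma trace_adjA_mul (lam : Fin m → ℝ) (X : Matrix (Fin n) (Fin n) ℝ) :
    (adjA A lam * X).trace = ∑ i, calA A X i * lam i := by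
  simp only [adjA, Finset.sum_mul, trace_sum, smul_mul, trace_smul, smul_eq_mul, calA, mul_comm]

variable {A} {b : Fin m → ℝ} {W : Matrix (Fin n) (Fin n) ℝ}
  {Pp : Matrix (Fin n) (Fin n) ℝ → Matrix (Fin n) (Fin n) ℝ}

lemma Fmap_sub_smul_eq_zero
    (hPp : ∀ M, IsProjOn {Y : Matrix (Fin n) (Fin n) ℝ | Y.PosSemidef} M (Pp M))
    {lam : Fin m → ℝ} (hlampsd : (adjA A lam).PosSemidef) (hblam : ∑ i, b i * lam i = 0)
    {y : Fin m → ℝ} (hy : Fmap A b W Pp y = 0) {t : ℝ} (ht : 0 ≤ t) :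
    Fmap A b W Pp (y - t • lam) = 0 := by
  have hPb : calA A (Pp (W + adjA A y)) = b := sub_eq_zero.mp hy
  have horth : (adjA A lam * Pp (W + adjA A y)).trace = 0 := by
    rw [trace_adjA_mul, hPb, hblam]
  have hshift : W + adjA A (y - t • lam) = (W + adjA A y) - t • adjA A lam := by
    rw [adjA_sub_smul]
    abel
  have hproj : Pp (W + adjA A (y - t • lam)) = Pp (W + adjA A y) := by
    rw [hshift]
    exact (hPp _).eq_of_isProjOn_sub_smul hlampsd horth ht (hPp _)
  rw [Fmap, hproj, hPb, sub_self]

end Dual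

lemma not_isBounded_of_forall_sub_smul_mem {E : Type*} [NormedAddCommGroup E] [NormedSpace ℝ E]
    {S : Set E} {y v : E} (hv : v ≠ 0) (hray : ∀ t : ℝ, 0 ≤ t → y - t • v ∈ S) :
    ¬ Bornology.IsBounded S := by
  intro hS
  obtain ⟨R, hR⟩ := isBounded_iff_forall_norm_le.mp hS
  have hv' : 0 < ‖v‖ := norm_pos_iff.mpr hv
  have hR0 : 0 ≤ R := (norm_nonneg _).trans (hR _ (hray 0 le_rfl))
  set t := (R + ‖y‖ + 1) / ‖v‖
  have htv : ‖t • v‖ = R + ‖y‖ + 1 := by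
    rw [norm_smul, Real.norm_of_nonneg (by positivity), div_mul_cancel₀ _ hv'.ne']
  have htri : ‖t • v‖ ≤ ‖y‖ + ‖y - t • v‖ := by
    simpa using norm_sub_le y (y - t • v)
  linarith [hR _ (hray t (by positivity))]

theorem stmt16_general {n m : ℕ} (A : Fin m → Matrix (Fin n) (Fin n) ℝ)
    (b : Fin m → ℝ)
    (W : Matrix (Fin n) (Fin n) ℝ)
    (Pp : Matrix (Fin n) (Fin n) ℝ → Matrix (Fin n) (Fin n) ℝ)
    (hPp : ∀ M, IsProjOn {Y : Matrix (Fin n) (Fin n) ℝ | Y.PosSemidef} M (Pp M))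
    (hstrong : ∃ y : Fin m → ℝ, Fmap A b W Pp y = 0)
    (lam : Fin m → ℝ) (hlam0 : adjA A lam ≠ 0)
    (hlampsd : (adjA A lam).PosSemidef) (hblam : ∑ i, b i * lam i = 0) :
    ¬ Bornology.IsBounded {y : Fin m → ℝ | Fmap A b W Pp y = 0} ∧
    ∀ ybar : Fin m → ℝ, Fmap A b W Pp ybar = 0 →
      ∀ t : ℝ, 0 ≤ t → Fmap A b W Pp (ybar - t • lam) = 0 := by
  have hray : ∀ ybar : Fin m → ℝ, Fmap A b W Pp ybar = 0 →
      ∀ t : ℝ, 0 ≤ t → Fmap A b W Pp (ybar - t • lam) = 0 :=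
    fun _ hy _ ht => Fmap_sub_smul_eq_zero hPp hlampsd hblam hy ht
  refine ⟨?_, hray⟩
  obtain ⟨ybar, hybar⟩ := hstrong
  have hlam : lam ≠ 0 := by
    rintro rfl
    exact hlam0 (adjA_zero A)
  exact not_isBounded_of_forall_sub_smul_mem hlam (hray ybar hybar)

/-- if strict feasibility fails for the nonempty spectrahedron `F` but
strong duality holds (the dual equation `F(y) = 0` has a root), and `λ` solves the
auxiliary system, then the solution set `S = {y : F(y) = 0}` is unbounded; more precisely
`F(ȳ − tλ) = 0` for every root `ȳ` and every `t ≥ 0`. -/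
theorem stmt16 {n m : ℕ} (A : Fin m → Matrix (Fin n) (Fin n) ℝ)
    (hA : ∀ i, (A i).IsSymm) (hLI : LinearIndependent ℝ A) (b : Fin m → ℝ)
    (hFne : (spectra A b).Nonempty)
    (hnostrict : ¬ ∃ X : Matrix (Fin n) (Fin n) ℝ, X.PosDef ∧ calA A X = b)
    (W : Matrix (Fin n) (Fin n) ℝ) (hW : W.IsSymm)
    (Pp : Matrix (Fin n) (Fin n) ℝ → Matrix (Fin n) (Fin n) ℝ)
    (hPp : ∀ M, IsProjOn {Y : Matrix (Fin n) (Fin n) ℝ | Y.PosSemidef} M (Pp M))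
    (hstrong : ∃ y : Fin m → ℝ, Fmap A b W Pp y = 0)
    (lam : Fin m → ℝ) (hlam0 : adjA A lam ≠ 0)
    (hlampsd : (adjA A lam).PosSemidef) (hblam : ∑ i, b i * lam i = 0) :
    ¬ Bornology.IsBounded {y : Fin m → ℝ | Fmap A b W Pp y = 0} ∧
    ∀ ybar : Fin m → ℝ, Fmap A b W Pp ybar = 0 →
      ∀ t : ℝ, 0 ≤ t → Fmap A b W Pp (ybar - t • lam) = 0 :=
  stmt16_general A b W Pp hPp hstrong lam hlam0 hlampsd hblam
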